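/- arXiv:1509.06203 — 2 statements merged into one kernel-verified Lean document; each statement's English description precedes it below -/
import Mathlib

section
/- For an order filter 𝒮 on L = Finset M, the order filter Ch(𝒮) on D = M →₀ ℕ is a prime filter if and only if 𝒮 is a prime filter; and in that case both 𝒮 and Ch(𝒮) are maximal filters (on L and D respectively). -/
/-- An order filter on a lattice `P`: a nonempty subset that is upward closed and
closed under binary meets. -/
def IsOrderFilter {P : Type*} [Lattice P] (F : Set P) : Prop :=
  F.Nonempty ∧ (∀ a ∈ F, ∀ b : P, a ≤ b → b ∈ F) ∧ (∀ a ∈ F, ∀ b ∈ F, a ⊓ b ∈ F)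

/-- A prime order filter on a lattice `P`: a proper order filter `F` such that
`a ⊔ b ∈ F` implies `a ∈ F` or `b ∈ F`. -/
def IsPrimeOrderFilter {P : Type*} [Lattice P] (F : Set P) : Prop :=
  IsOrderFilter F ∧ F ≠ Set.univ ∧ ∀ a b : P, a ⊔ b ∈ F → a ∈ F ∨ b ∈ F

/-- A maximal order filter on a lattice `P`: a proper order filter that is maximal
under inclusion among proper order filters. -/
def IsMaximalOrderFilter {P : Type*} [Lattice P] (F : Set P) : Prop :=
  IsOrderFilter F ∧ F ≠ Set.univ ∧
    ∀ G : Set P, IsOrderFilter G → G ≠ Set.univ → F ⊆ G → G = F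

/-- The characteristic function `ch S : M →₀ ℕ` of a finite set `S`,
with `(ch S) m = 1` if `m ∈ S` and `0` otherwise. -/
noncomputable def chFun {M : Type*} (S : Finset M) : M →₀ ℕ :=
  Finsupp.indicator S (fun _ _ => 1)

/-- `Supp F = {supp f | f ∈ F}`, where `supp f = {m | f m ≠ 0}` is the support of
a finitely supported function `f : M →₀ ℕ`. -/
def SuppFilter {M : Type*} (F : Set (M →₀ ℕ)) : Set (Finset M) :=
  Finsupp.support '' F

/-- `Ch 𝒮 = {f : M →₀ ℕ | ∃ S ∈ 𝒮, ch S ≤ f}`. -/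
noncomputable def ChFilter {M : Type*} (𝒮 : Set (Finset M)) : Set (M →₀ ℕ) :=
  {f : M →₀ ℕ | ∃ S ∈ 𝒮, chFun S ≤ f}

/-!
In a generalized Boolean algebra such as `Finset M`, a prime filter `F` is maximal: if `x ∉ F`
and `S ∈ F`, then `S = (S ⊓ x) ⊔ (S \ x)` forces `S \ x ∈ F`, an element disjoint from `x`, so
no proper filter contains both `F` and `x`. The support map is a surjective lattice homomorphism
`M →₀ ℕ → Finset M` along which `Ch 𝒮` is the preimage of `𝒮`; primality transfers along such
maps in both directions, and `Ch 𝒮` inherits the disjoint witnesses `ch (S \ supp f)` from `𝒮`.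
-/

section OrderFilter

variable {P Q : Type*} [Lattice P] [Lattice Q] {F : Set P}

theorem IsOrderFilter.isUpperSet (hF : IsOrderFilter F) : IsUpperSet F :=
  fun a b hab ha => hF.2.1 a ha b hab

theorem IsOrderFilter.eq_univ_iff_bot_mem [OrderBot P] (hF : IsOrderFilter F) :
    F = Set.univ ↔ ⊥ ∈ F :=
  ⟨fun h => h ▸ Set.mem_univ _,
    fun h => Set.eq_univ_of_forall fun _ => hF.isUpperSet bot_le h⟩

theorem IsOrderFilter.preimage (hF : IsOrderFilter F) (φ : LatticeHom Q P)
    (hφ : Function.Surjective φ) : IsOrderFilter (φ ⁻¹' F) := by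
  obtain ⟨⟨x, hx⟩, hup, hinf⟩ := hF
  obtain ⟨a, rfl⟩ := hφ x
  exact ⟨⟨a, hx⟩, fun a ha b hab => hup _ ha _ (OrderHomClass.mono φ hab),
    fun a ha b hb => by rw [Set.mem_preimage, map_inf]; exact hinf _ ha _ hb⟩

theorem isPrimeOrderFilter_preimage_iff (hF : IsOrderFilter F) (φ : LatticeHom Q P)
    (hφ : Function.Surjective φ) : IsPrimeOrderFilter (φ ⁻¹' F) ↔ IsPrimeOrderFilter F := by
  refine and_congr (iff_of_true (hF.preimage φ hφ) hF) (and_congr ?_ ?_)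
  · rw [Ne, Set.preimage_eq_univ_iff, hφ.range_eq, Set.univ_subset_iff]
  · simp only [Set.mem_preimage, map_sup]
    exact (hφ.forall₂ (p := fun a b => a ⊔ b ∈ F → a ∈ F ∨ b ∈ F)).symm

theorem IsOrderFilter.isMaximalOrderFilter_of_exists_disjoint [OrderBot P]
    (hF : IsOrderFilter F) (hF_ne : F ≠ Set.univ)
    (hdisj : ∀ x ∉ F, ∃ y ∈ F, Disjoint x y) : IsMaximalOrderFilter F := by
  refine ⟨hF, hF_ne, fun G hG hG_ne hFG => (hFG.antisymm fun x hxG => ?_).symm⟩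
  by_contra hxF
  obtain ⟨y, hyF, hxy⟩ := hdisj x hxF
  exact hG_ne (hG.eq_univ_iff_bot_mem.2 (hxy.eq_bot ▸ hG.2.2 x hxG y (hFG hyF)))

theorem IsPrimeOrderFilter.exists_disjoint_of_notMem {B : Type*} [GeneralizedBooleanAlgebra B]
    {F : Set B} (hF : IsPrimeOrderFilter F) {x : B} (hx : x ∉ F) :
    ∃ y ∈ F, Disjoint x y := by
  obtain ⟨⟨⟨s, hs⟩, hup, -⟩, -, hprime⟩ := hF
  rw [← sup_inf_sdiff s x] at hs
  rcases hprime _ _ hs with hsx | hsx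
  · exact absurd (hup _ hsx x inf_le_right) hx
  · exact ⟨s \ x, hsx, disjoint_sdiff_self_right⟩

theorem IsPrimeOrderFilter.isMaximalOrderFilter {B : Type*} [GeneralizedBooleanAlgebra B]
    {F : Set B} (hF : IsPrimeOrderFilter F) : IsMaximalOrderFilter F :=
  hF.1.isMaximalOrderFilter_of_exists_disjoint hF.2.1 fun _ hx =>
    hF.exists_disjoint_of_notMem hx

end OrderFilter

section ChFilter

variable {M : Type*} [DecidableEq M] {𝒮 : Set (Finset M)}

def Finsupp.supportLatticeHom : LatticeHom (M →₀ ℕ) (Finset M) where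
  toFun := Finsupp.support
  map_sup' := Finsupp.support_sup
  map_inf' := Finsupp.support_inf

@[simp]
theorem Finsupp.coe_supportLatticeHom : ⇑(Finsupp.supportLatticeHom (M := M)) = Finsupp.support :=
  rfl

theorem chFun_support (S : Finset M) : (chFun S).support = S := by
  ext m
  simp [chFun]

theorem Finsupp.supportLatticeHom_surjective :
    Function.Surjective (Finsupp.supportLatticeHom (M := M)) :=
  fun S => ⟨chFun S, chFun_support S⟩

theorem chFun_le_iff_subset_support {S : Finset M} {f : M →₀ ℕ} :
    chFun S ≤ f ↔ S ⊆ f.support := by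
  rw [Finsupp.le_iff, chFun_support]
  refine forall₂_congr fun m hm => ?_
  simp [chFun, hm, Nat.one_le_iff_ne_zero]

theorem chFilter_eq_preimage (h𝒮 : IsUpperSet 𝒮) :
    ChFilter 𝒮 = Finsupp.supportLatticeHom ⁻¹' 𝒮 := by
  ext f
  exact ⟨fun ⟨S, hS, hSf⟩ => h𝒮 (chFun_le_iff_subset_support.1 hSf) hS,
    fun hf => ⟨f.support, hf, chFun_le_iff_subset_support.2 subset_rfl⟩⟩

theorem isPrimeOrderFilter_chFilter_iff (h𝒮 : IsOrderFilter 𝒮) :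
    IsPrimeOrderFilter (ChFilter 𝒮) ↔ IsPrimeOrderFilter 𝒮 := by
  rw [chFilter_eq_preimage h𝒮.isUpperSet]
  exact isPrimeOrderFilter_preimage_iff h𝒮 _ Finsupp.supportLatticeHom_surjective

theorem IsPrimeOrderFilter.isMaximalOrderFilter_chFilter (h𝒮 : IsPrimeOrderFilter 𝒮) :
    IsMaximalOrderFilter (ChFilter 𝒮) := by
  obtain ⟨hCh, hCh_ne, -⟩ := (isPrimeOrderFilter_chFilter_iff h𝒮.1).2 h𝒮
  refine hCh.isMaximalOrderFilter_of_exists_disjoint hCh_ne fun f hf => ?_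
  rw [chFilter_eq_preimage h𝒮.1.isUpperSet] at hf ⊢
  obtain ⟨T, hT, hfT⟩ := h𝒮.exists_disjoint_of_notMem hf
  refine ⟨chFun T, by
    rwa [Set.mem_preimage, Finsupp.coe_supportLatticeHom, chFun_support], ?_⟩
  rwa [Finsupp.disjoint_iff, chFun_support]

end ChFilter

/-- For an order filter `𝒮` on `L = Finset M`, the order filter `Ch 𝒮` on
`D = M →₀ ℕ` is prime iff `𝒮` is prime; and in that case both `𝒮` and `Ch 𝒮` are
maximal filters. -/
theorem chFilter_isPrime_iff_and_maximal (M : Type*) [DecidableEq M]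
    (𝒮 : Set (Finset M)) (h𝒮 : IsOrderFilter 𝒮) :
    (IsPrimeOrderFilter (ChFilter 𝒮) ↔ IsPrimeOrderFilter 𝒮) ∧
    (IsPrimeOrderFilter 𝒮 →
      IsMaximalOrderFilter 𝒮 ∧ IsMaximalOrderFilter (ChFilter 𝒮)) :=
  ⟨isPrimeOrderFilter_chFilter_iff h𝒮, fun hprime =>
    ⟨hprime.isMaximalOrderFilter, hprime.isMaximalOrderFilter_chFilter⟩⟩
end

section
/- Let B be a Prüfer domain with fraction field L, i.e., an integral domain such that for every prime ideal q of B the localization B_q, viewed as a subring of L, is a valuation ring of L. Then the map p ↦ B_p is a bijection from the set of prime ideals of B onto the set of valuation subrings of L that contain B; the zero ideal corresponds to the trivial valuation subring L itself, and the inverse map sends a valuation subring R ⊇ B to m_R ∩ B, where m_R is the maximal ideal of R. -/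
/-- `x ∈ L` belongs to the localization `B_p` of `B` at the prime `p`, viewed
inside the fraction field `L`: `x = a/b` with `b ∉ p`. -/
def MemLocalizationAt (B L : Type*) [CommRing B] [Field L] [Algebra B L]
    (p : Ideal B) (x : L) : Prop :=
  ∃ a b : B, b ∉ p ∧ x * algebraMap B L b = algebraMap B L a

/-!
The prime `p` is recovered from `B_p` as the set of `b ≠ 0` with `1/b ∉ B_p` (together
with `0`), which gives injectivity. For a valuation subring `R ⊇ B` with `p = m_R ∩ B`, the
elements of `B \ p` are units of `R`, so `B_p ⊆ R`; conversely, if `x ∈ R` and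
`x⁻¹ = a/b ∈ B_p`, then `1/a = x/b ∈ R`, so `a ∉ p` and `x = b/a ∈ B_p`.
-/

lemma Subring.isUnit_iff_ne_zero_and_inv_mem {K : Type*} [Field K] {R : Subring K} {a : R} :
    IsUnit a ↔ (a : K) ≠ 0 ∧ (a : K)⁻¹ ∈ R :=
  ⟨fun ha => ⟨by simpa using ha.ne_zero, Submonoid.inv_mem_of_isUnit ha⟩,
    fun ⟨ha, hinv⟩ => IsUnit.of_mul_eq_one ⟨_, hinv⟩ (Subtype.ext (mul_inv_cancel₀ ha))⟩

section

variable {B L : Type*} [CommRing B] [Field L] [Algebra B L] {p : Ideal B}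

namespace MemLocalizationAt

lemma algebraMap (hp : p ≠ ⊤) (a : B) : MemLocalizationAt B L p (algebraMap B L a) :=
  ⟨a, 1, (Ideal.ne_top_iff_one p).mp hp, by simp⟩

lemma mul (hp : p.IsPrime) {x y : L} (hx : MemLocalizationAt B L p x)
    (hy : MemLocalizationAt B L p y) : MemLocalizationAt B L p (x * y) := by
  obtain ⟨a, b, hb, hx⟩ := hx
  obtain ⟨c, d, hd, hy⟩ := hy
  refine ⟨a * c, b * d, fun h => (hp.mem_or_mem h).elim hb hd, ?_⟩
  rw [map_mul, map_mul, ← hx, ← hy]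
  ring

lemma add (hp : p.IsPrime) {x y : L} (hx : MemLocalizationAt B L p x)
    (hy : MemLocalizationAt B L p y) : MemLocalizationAt B L p (x + y) := by
  obtain ⟨a, b, hb, hx⟩ := hx
  obtain ⟨c, d, hd, hy⟩ := hy
  refine ⟨a * d + c * b, b * d, fun h => (hp.mem_or_mem h).elim hb hd, ?_⟩
  rw [map_add, map_mul, map_mul, map_mul, ← hx, ← hy]
  ring

lemma neg {x : L} : MemLocalizationAt B L p x → MemLocalizationAt B L p (-x) := by
  rintro ⟨a, b, hb, hx⟩
  exact ⟨-a, b, hb, by rw [map_neg, neg_mul, hx]⟩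

end MemLocalizationAt

def localizationSubring (p : Ideal B) (hp : p.IsPrime) : Subring L where
  carrier := {x | MemLocalizationAt B L p x}
  one_mem' := by simpa using MemLocalizationAt.algebraMap (L := L) hp.ne_top 1
  zero_mem' := by simpa using MemLocalizationAt.algebraMap (L := L) hp.ne_top 0
  mul_mem' := MemLocalizationAt.mul hp
  add_mem' := MemLocalizationAt.add hp
  neg_mem' := MemLocalizationAt.neg

def localizationValuationSubring (p : Ideal B) (hp : p.IsPrime)
    (hval : ∀ x : L, x ≠ 0 → MemLocalizationAt B L p x ∨ MemLocalizationAt B L p x⁻¹) :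
    ValuationSubring L :=
  ValuationSubring.ofSubring (localizationSubring p hp) fun x => by
    rcases eq_or_ne x 0 with rfl | hx
    · exact Or.inl (zero_mem _)
    · exact hval x hx

lemma memLocalizationAt_inv_algebraMap_iff (hinj : Function.Injective (algebraMap B L))
    {b : B} (hb : b ≠ 0) : MemLocalizationAt B L p (algebraMap B L b)⁻¹ ↔ b ∉ p := by
  have hb' : algebraMap B L b ≠ 0 := (map_ne_zero_iff _ hinj).mpr hb
  constructor
  · rintro ⟨a, c, hc, h⟩ hbp
    have hca : c = a * b := hinj <| by
      rw [map_mul, ← h, mul_comm, ← mul_assoc, mul_inv_cancel₀ hb', one_mul]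
    exact hc (hca ▸ p.mul_mem_left a hbp)
  · intro hbp
    exact ⟨1, b, hbp, by rw [inv_mul_cancel₀ hb', map_one]⟩

lemma Ideal.eq_of_memLocalizationAt_iff (hinj : Function.Injective (algebraMap B L))
    {q : Ideal B} (h : ∀ x : L, MemLocalizationAt B L p x ↔ MemLocalizationAt B L q x) :
    p = q := by
  ext b
  rcases eq_or_ne b 0 with rfl | hb
  · simp only [zero_mem]
  · rw [← not_iff_not, ← memLocalizationAt_inv_algebraMap_iff hinj hb,
      ← memLocalizationAt_inv_algebraMap_iff hinj hb, h]

lemma memLocalizationAt_bot [IsFractionRing B L] (x : L) : MemLocalizationAt B L ⊥ x := by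
  obtain ⟨⟨a, b⟩, h⟩ := IsLocalization.surj (nonZeroDivisors B) x
  refine ⟨a, b, fun hb => ?_, h⟩
  have hb0 : (b : B) = 0 := hb
  simpa [hb0] using IsLocalization.map_units L b

end

namespace ValuationSubring

variable {B L : Type*} [CommRing B] [Field L] [Algebra B L]
  (R : ValuationSubring L) (hBR : ∀ b : B, algebraMap B L b ∈ R)

/-- `m_R ∩ B`. -/
def comapMaximalIdeal : Ideal B :=
  (IsLocalRing.maximalIdeal R).comap ((algebraMap B L).codRestrict R.toSubring hBR)

instance : (R.comapMaximalIdeal hBR).IsPrime := Ideal.IsPrime.comap _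

variable {R hBR}

lemma notMem_comapMaximalIdeal_iff {b : B} :
    b ∉ R.comapMaximalIdeal hBR ↔ algebraMap B L b ≠ 0 ∧ (algebraMap B L b)⁻¹ ∈ R := by
  rw [comapMaximalIdeal, Ideal.mem_comap, IsLocalRing.mem_maximalIdeal, _root_.mem_nonunits_iff,
    not_not, Subring.isUnit_iff_ne_zero_and_inv_mem]
  rfl

lemma mem_of_memLocalizationAt_comapMaximalIdeal {x : L}
    (hx : MemLocalizationAt B L (R.comapMaximalIdeal hBR) x) : x ∈ R := by
  obtain ⟨a, b, hb, hx⟩ := hx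
  obtain ⟨hb0, hbinv⟩ := notMem_comapMaximalIdeal_iff.mp hb
  have : x = algebraMap B L a * (algebraMap B L b)⁻¹ := by
    rw [← hx, mul_inv_cancel_right₀ hb0]
  exact this ▸ MulMemClass.mul_mem (hBR a) hbinv

lemma memLocalizationAt_comapMaximalIdeal_of_inv {x : L} (hxR : x ∈ R) (hx0 : x ≠ 0)
    (hx : MemLocalizationAt B L (R.comapMaximalIdeal hBR) x⁻¹) :
    MemLocalizationAt B L (R.comapMaximalIdeal hBR) x := by
  obtain ⟨a, b, hb, hab⟩ := hx
  obtain ⟨hb0, hbinv⟩ := notMem_comapMaximalIdeal_iff.mp hb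
  refine ⟨b, a, notMem_comapMaximalIdeal_iff.mpr ⟨?_, ?_⟩, ?_⟩
  · rw [← hab]; exact mul_ne_zero (inv_ne_zero hx0) hb0
  · rw [← hab, mul_inv, inv_inv]; exact MulMemClass.mul_mem hxR hbinv
  · rw [← hab, mul_inv_cancel_left₀ hx0]

lemma mem_iff_memLocalizationAt_comapMaximalIdeal
    (hval : ∀ x : L, x ≠ 0 → MemLocalizationAt B L (R.comapMaximalIdeal hBR) x ∨
      MemLocalizationAt B L (R.comapMaximalIdeal hBR) x⁻¹) (x : L) :
    x ∈ R ↔ MemLocalizationAt B L (R.comapMaximalIdeal hBR) x := by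
  refine ⟨fun hxR => ?_, mem_of_memLocalizationAt_comapMaximalIdeal⟩
  rcases eq_or_ne x 0 with rfl | hx0
  · simpa using MemLocalizationAt.algebraMap (L := L) (Ideal.IsPrime.ne_top inferInstance) (0 : B)
  · exact (hval x hx0).elim id (memLocalizationAt_comapMaximalIdeal_of_inv hxR hx0)

end ValuationSubring

theorem primes_biject_valuationSubrings_of_prufer_general
    (B L : Type*) [CommRing B] [Field L] [Algebra B L]
    [IsFractionRing B L]
    (hPrufer : ∀ q : Ideal B, q.IsPrime → ∀ x : L, x ≠ 0 →
      (MemLocalizationAt B L q x ∨ MemLocalizationAt B L q x⁻¹)) :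
    (∀ p : Ideal B, p.IsPrime → ∃ R : ValuationSubring L,
        (∀ b : B, algebraMap B L b ∈ R) ∧
        (∀ x : L, x ∈ R ↔ MemLocalizationAt B L p x)) ∧
    (∀ p q : Ideal B, p.IsPrime → q.IsPrime →
        (∀ x : L, MemLocalizationAt B L p x ↔ MemLocalizationAt B L q x) → p = q) ∧
    (∀ R : ValuationSubring L, (hBR : ∀ b : B, algebraMap B L b ∈ R) →
        ∃ p : Ideal B, p.IsPrime ∧
          p = (IsLocalRing.maximalIdeal R).comap
              ((algebraMap B L).codRestrict R.toSubring hBR) ∧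
          ∀ x : L, x ∈ R ↔ MemLocalizationAt B L p x) ∧
    (∀ x : L, MemLocalizationAt B L (⊥ : Ideal B) x) := by
  refine ⟨fun p hp => ?_, fun p q _ _ => Ideal.eq_of_memLocalizationAt_iff
    (IsFractionRing.injective B L), fun R hBR => ?_, memLocalizationAt_bot⟩
  · exact ⟨localizationValuationSubring p hp (hPrufer p hp),
      MemLocalizationAt.algebraMap hp.ne_top, fun _ => Iff.rfl⟩
  · exact ⟨R.comapMaximalIdeal hBR, inferInstance, rfl,
      ValuationSubring.mem_iff_memLocalizationAt_comapMaximalIdeal (hPrufer _ inferInstance)⟩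

/-- Let `B` be a Prüfer domain with fraction field `L`: for every prime ideal `q`
of `B`, the localization `B_q` inside `L` is a valuation ring of `L`. Then
`p ↦ B_p` is a bijection from the prime ideals of `B` onto the valuation subrings
of `L` containing `B`: each `B_p` is a valuation subring of `L` containing `B`,
the map is injective, every valuation subring `R ⊇ B` equals `B_p` for the prime
`p = m_R ∩ B` (where `m_R` is the maximal ideal of `R`), and the zero ideal
corresponds to the trivial valuation subring `L` itself. -/
theorem primes_biject_valuationSubrings_of_prufer
    (B L : Type*) [CommRing B] [IsDomain B] [Field L] [Algebra B L]
    [IsFractionRing B L]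
    (hPrufer : ∀ q : Ideal B, q.IsPrime → ∀ x : L, x ≠ 0 →
      (MemLocalizationAt B L q x ∨ MemLocalizationAt B L q x⁻¹)) :
    (∀ p : Ideal B, p.IsPrime → ∃ R : ValuationSubring L,
        (∀ b : B, algebraMap B L b ∈ R) ∧
        (∀ x : L, x ∈ R ↔ MemLocalizationAt B L p x)) ∧
    (∀ p q : Ideal B, p.IsPrime → q.IsPrime →
        (∀ x : L, MemLocalizationAt B L p x ↔ MemLocalizationAt B L q x) → p = q) ∧
    (∀ R : ValuationSubring L, (hBR : ∀ b : B, algebraMap B L b ∈ R) →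
        ∃ p : Ideal B, p.IsPrime ∧
          p = (IsLocalRing.maximalIdeal R).comap
              ((algebraMap B L).codRestrict R.toSubring hBR) ∧
          ∀ x : L, x ∈ R ↔ MemLocalizationAt B L p x) ∧
    (∀ x : L, MemLocalizationAt B L (⊥ : Ideal B) x) :=
  primes_biject_valuationSubrings_of_prufer_general B L hPrufer
end
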